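/- Let P ⊂ ℝ^n be a convex polytope and v a point in the affine span of P with v ∉ P. If a point p in the relative interior of a face f of P is visible from v, then every point of f is visible from v. -/

import Mathlib

/-!
Write `p = a q + b q'` with `a, b > 0` and `q' ∈ f`; such a `q'` exists because `p` lies in the
relative interior of `f`, so the line from `q` through `p` stays in `f` a little beyond `p`.
If some `x ∈ P` lay strictly between `v` and `q`, then by convexity `P` would contain a point of
the triangle `v q q'` strictly between `v` and `p`, contradicting the visibility of `p`.
-/

open AffineMap Filter Set Topology

section Module

variable {𝕜 E : Type*} [Field 𝕜] [LinearOrder 𝕜] [IsStrictOrderedRing 𝕜]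
  [AddCommGroup E] [Module 𝕜 E]

theorem segment_inter_eq_singleton_iff_isVisible {s : Set E} {v q : E} (hq : q ∈ s)
    (hv : v ∉ s) : segment 𝕜 v q ∩ s = {q} ↔ IsVisible 𝕜 s v q := by
  simp only [IsVisible, Sbtw, ← mem_segment_iff_wbtw, Set.ext_iff, mem_inter_iff,
    mem_singleton_iff]
  refine ⟨fun h z hz ⟨hzs, _, hzq⟩ => hzq ((h z).1 ⟨hzs, hz⟩), fun h z => ⟨?_, ?_⟩⟩
  · rintro ⟨hzs, hz⟩
    by_contra hzq
    exact h hz ⟨hzs, ne_of_mem_of_not_mem hz hv, hzq⟩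
  · rintro rfl
    exact ⟨right_mem_segment 𝕜 v z, hq⟩

theorem IsVisible.of_mem_openSegment {C : Set E} (hC : Convex 𝕜 C) {v p q q' : E}
    (hv : v ∉ C) (hq : q ∈ C) (hq' : q' ∈ C) (hp : p ∈ openSegment 𝕜 q q')
    (hvis : IsVisible 𝕜 C v p) : IsVisible 𝕜 C v q := by
  obtain ⟨a, b, ha, hb, hab, rfl⟩ := hp
  rw [← hC.convexHull_eq] at hv hvis ⊢
  refine IsVisible.of_convexHull_of_pos (t := Finset.univ) (a := ![q, q']) (w := ![a, b])
    (i := 0) ?_ ?_ ?_ hv ?_ (Finset.mem_univ _) ha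
  · simp [Fin.forall_fin_two, ha.le, hb.le]
  · simpa [Fin.sum_univ_two] using hab
  · simp [Fin.forall_fin_two, hq, hq']
  · simpa [Fin.sum_univ_two] using hvis

end Module

theorem exists_mem_openSegment_of_mem_intrinsicInterior {𝕜 E : Type*} [Field 𝕜]
    [LinearOrder 𝕜] [IsStrictOrderedRing 𝕜] [TopologicalSpace 𝕜] [OrderTopology 𝕜]
    [AddCommGroup E] [Module 𝕜 E] [TopologicalSpace E] [IsTopologicalAddGroup E]
    [ContinuousSMul 𝕜 E] {f : Set E} {p q : E} (hp : p ∈ intrinsicInterior 𝕜 f) (hq : q ∈ f) :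
    ∃ q' ∈ f, p ∈ openSegment 𝕜 q q' := by
  obtain ⟨p', hp', rfl⟩ := hp
  have hf : f ∈ 𝓝[affineSpan 𝕜 f] (p' : E) :=
    preimage_coe_mem_nhds_subtype.1 (mem_interior_iff_mem_nhds.1 hp')
  have hline : Tendsto (lineMap q p') (𝓝[>] (1 : 𝕜)) (𝓝[affineSpan 𝕜 f] (p' : E)) := by
    refine tendsto_nhdsWithin_iff.2 ⟨?_, .of_forall fun t => ?_⟩
    · simpa using (lineMap_continuous.tendsto (1 : 𝕜)).mono_left nhdsWithin_le_nhds
    · exact lineMap_mem t (subset_affineSpan 𝕜 f hq) p'.2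
  obtain ⟨t, ht, ht1⟩ := ((hline.eventually_mem hf).and self_mem_nhdsWithin).exists
  have ht0 : (0 : 𝕜) < t := zero_lt_one.trans ht1
  refine ⟨lineMap q p' t, ht, ?_⟩
  convert lineMap_mem_openSegment 𝕜 q (lineMap q (p' : E) t)
    ⟨inv_pos.2 ht0, inv_lt_one_of_one_lt₀ ht1⟩
  rw [lineMap_lineMap_right, inv_mul_cancel₀ ht0.ne', lineMap_apply_one]

theorem stmt_5_general (n : ℕ) (V : Finset (Fin n → ℝ)) (P : Set (Fin n → ℝ))
    (hP : P = convexHull ℝ ↑V)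
    (v : Fin n → ℝ) (hvP : v ∉ P)
    (f : Set (Fin n → ℝ)) (hf : IsExposed ℝ P f)
    (p : Fin n → ℝ) (hp : p ∈ intrinsicInterior ℝ f)
    (hvis : segment ℝ v p ∩ P = {p}) :
    ∀ q ∈ f, segment ℝ v q ∩ P = {q} := by
  intro q hq
  have hPconv : Convex ℝ P := hP ▸ convex_convexHull ℝ _
  obtain ⟨q', hq', hpq⟩ := exists_mem_openSegment_of_mem_intrinsicInterior hp hq
  have hpP : p ∈ P := hf.subset (intrinsicInterior_subset hp)
  rw [segment_inter_eq_singleton_iff_isVisible hpP hvP] at hvis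
  rw [segment_inter_eq_singleton_iff_isVisible (hf.subset hq) hvP]
  exact hvis.of_mem_openSegment hPconv hvP (hf.subset hq) (hf.subset hq') hpq

/-- If `P ⊆ ℝⁿ` is a polytope, `v` is in the affine span of `P` but outside `P`, and some
point `p` in the relative interior of a face `f` of `P` is visible from `v` (the segment
`[v,p]` meets `P` only in `p`), then every point of `f` is visible from `v`. -/
theorem stmt_5 (n : ℕ) (V : Finset (Fin n → ℝ)) (P : Set (Fin n → ℝ))
    (hP : P = convexHull ℝ ↑V)
    (v : Fin n → ℝ) (hv : v ∈ affineSpan ℝ P) (hvP : v ∉ P)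
    (f : Set (Fin n → ℝ)) (hf : IsExposed ℝ P f)
    (p : Fin n → ℝ) (hp : p ∈ intrinsicInterior ℝ f)
    (hvis : segment ℝ v p ∩ P = {p}) :
    ∀ q ∈ f, segment ℝ v q ∩ P = {q} :=
  stmt_5_general n V P hP v hvP f hf p hp hvis
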